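/- Existence of admissible augmentations: for every execution of prog whose thread width is at most β, there exist a sequence of augmented global configurations M̂₀,…,M̂_n and thread mappings α, γ such that (M̂₀,…,M̂_n, α, γ) is admissible for the execution. -/
import Mathlib


/-! Core semantics of the concurrent language with fork/join. -/

namespace Conc

abbrev Var := String
abbrev Val := ℤ
/-- Integer-valued expressions (shallow embedding, evaluated in a combined state). -/
abbrev AExp := (Var → Val) → Val
/-- Boolean-valued expressions. -/
abbrev BExp := (Var → Val) → Prop

/-- Commands of the language, parameterized by the type `T` of thread template names. -/
inductive Cmd (T : Type) where
  | assign : Var → AExp → Cmd T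
  | assume_ : BExp → Cmd T
  | assert_ : BExp → Cmd T
  | ite : BExp → Cmd T → Cmd T → Cmd T
  | while_ : BExp → Cmd T → Cmd T
  | fork : AExp → T → Cmd T
  | join : AExp → Cmd T
  | seq : Cmd T → Cmd T → Cmd T

/-- A remainder program: a command, successful termination `Ω`, or failure `↯`. -/
inductive Rem (T : Type) where
  | run : Cmd T → Rem T
  | term : Rem T   -- Ω
  | fail : Rem T   -- ↯

/-- Sequential composition `C ; X` of a command with a remainder, with `C ; Ω = C`. -/
def Rem.after {T : Type} (C : Cmd T) : Rem T → Rem T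
  | .run C' => .run (C.seq C')
  | _ => .run C

/-- A local configuration `⟨X, θ, t, s⟩`. -/
structure LConf (T : Type) where
  rem : Rem T
  tmpl : T
  tid : Option Val
  st : Var → Val

/-- A program: bodies of thread templates, the main template, and the global variables. -/
structure Prog (T : Type) where
  body : T → Cmd T
  main : T
  isGlobal : Var → Bool

/-- Combined state `s ∪ g`. -/
def Prog.comb {T : Type} (P : Prog T) (g s : Var → Val) : Var → Val :=
  fun x => if P.isGlobal x then g x else s x

/-- Kinds of simple statements labelling a step. -/
inductive Lab (T : Type) where
  | atomic : Lab T
  | forkL : T → Lab T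
  | joinL : Lab T

/-- Global configurations: a multiset of local configurations and a global state. -/
abbrev GConf (T : Type) := Multiset (LConf T) × (Var → Val)

/-- The small-step semantic transition relation. -/
inductive Step {T : Type} (P : Prog T) : Lab T → GConf T → GConf T → Prop where
  | assume_ {e : BExp} {X θ t s g} (h : e (P.comb g s)) :
      Step P .atomic ({⟨Rem.after (.assume_ e) X, θ, t, s⟩}, g) ({⟨X, θ, t, s⟩}, g)
  | assignGlobal {x e X θ t s g} (hx : P.isGlobal x = true) :
      Step P .atomic ({⟨Rem.after (.assign x e) X, θ, t, s⟩}, g)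
        ({⟨X, θ, t, s⟩}, Function.update g x (e (P.comb g s)))
  | assignLocal {x e X θ t s g} (hx : P.isGlobal x = false) :
      Step P .atomic ({⟨Rem.after (.assign x e) X, θ, t, s⟩}, g)
        ({⟨X, θ, t, Function.update s x (e (P.comb g s))⟩}, g)
  | assert₁ {e : BExp} {X θ t s g} (h : e (P.comb g s)) :
      Step P .atomic ({⟨Rem.after (.assert_ e) X, θ, t, s⟩}, g) ({⟨X, θ, t, s⟩}, g)
  | assert₂ {e : BExp} {X θ t s g} (h : ¬ e (P.comb g s)) :
      Step P .atomic ({⟨Rem.after (.assert_ e) X, θ, t, s⟩}, g) ({⟨.fail, θ, t, s⟩}, g)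
  | ite₁ {e C₁ C₂ X θ t s g} (h : e (P.comb g s)) :
      Step P .atomic ({⟨Rem.after (.ite e C₁ C₂) X, θ, t, s⟩}, g)
        ({⟨Rem.after C₁ X, θ, t, s⟩}, g)
  | ite₂ {e C₁ C₂ X θ t s g} (h : ¬ e (P.comb g s)) :
      Step P .atomic ({⟨Rem.after (.ite e C₁ C₂) X, θ, t, s⟩}, g)
        ({⟨Rem.after C₂ X, θ, t, s⟩}, g)
  | while₁ {e C X θ t s g} (h : e (P.comb g s)) :
      Step P .atomic ({⟨Rem.after (.while_ e C) X, θ, t, s⟩}, g)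
        ({⟨Rem.after C (Rem.after (.while_ e C) X), θ, t, s⟩}, g)
  | while₂ {e C X θ t s g} (h : ¬ e (P.comb g s)) :
      Step P .atomic ({⟨Rem.after (.while_ e C) X, θ, t, s⟩}, g) ({⟨X, θ, t, s⟩}, g)
  | fork {e θ' X θ t s s' g} :
      Step P (.forkL θ') ({⟨Rem.after (.fork e θ') X, θ, t, s⟩}, g)
        ({⟨X, θ, t, s⟩, ⟨.run (P.body θ'), θ', some (e (P.comb g s)), s'⟩}, g)
  | join {e X θ t s θ' s' g} :
      Step P .joinL
        ({⟨Rem.after (.join e) X, θ, t, s⟩, ⟨.term, θ', some (e (P.comb g s)), s'⟩}, g)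
        ({⟨X, θ, t, s⟩}, g)
  | frame {l M₁ M₁' M₂ g g'} :
      Step P l (M₁, g) (M₁', g') → Step P l (M₁ + M₂, g) (M₁' + M₂, g')

/-- Initial global configurations. -/
def IsInit {T : Type} (P : Prog T) (c : GConf T) : Prop :=
  ∃ s, c.1 = {⟨.run (P.body P.main), P.main, none, s⟩}

/-- `cfg 0 → cfg 1 → … → cfg n` is an execution with statement kinds `lab`. -/
def IsExec {T : Type} (P : Prog T) (n : ℕ) (cfg : ℕ → GConf T) (lab : ℕ → Lab T) : Prop :=
  IsInit P (cfg 0) ∧ ∀ i < n, Step P (lab i) (cfg i) (cfg (i + 1))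

/-- The number of local configurations with thread template `θ` in `M`. -/
def tmplCount {T : Type} [DecidableEq T] (M : Multiset (LConf T)) (θ : T) : ℕ :=
  Multiset.card (M.filter (fun c => c.tmpl = θ))

/-- The thread width of the program `P` is at most `β`. -/
def WidthLe {T : Type} [DecidableEq T] (P : Prog T) (β : ℕ) : Prop :=
  ∀ n cfg lab, IsExec P n cfg lab → ∀ i ≤ n, ∀ θ, tmplCount (cfg i).1 θ ≤ β

/-- `P` is correct: no execution reaches the failure marker `↯`. -/
def Correct {T : Type} (P : Prog T) : Prop :=
  ¬ ∃ n cfg lab, IsExec P n cfg lab ∧ ∃ i ≤ n, ∃ c ∈ (cfg i).1, c.rem = Rem.fail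

end Conc

namespace Conc

/-! Augmented executions: local configurations annotated with instance IDs. -/

/-- An augmented local configuration `⟨C, θ, t, s, k⟩`: a local configuration together
with an instance ID `k ∈ {⊥, 1, …, β}` (with `⊥` encoded as `none`). -/
structure ALConf (T : Type) (β : ℕ) where
  lconf : LConf T
  iid : Option (Fin β)

/-- A collection of augmented local configurations is conformist if no two of its
elements share both the thread template and the instance ID. -/
def Conformist {T : Type} {β : ℕ} [DecidableEq T] (M : Multiset (ALConf T β)) : Prop :=
  ∀ (θ : T) (k : Option (Fin β)),
    M.countP (fun c => c.lconf.tmpl = θ ∧ c.iid = k) ≤ 1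

/-- The instance ID `j` of template `θ'` is used by some thread in `M`. -/
def UsedIn {T : Type} {β : ℕ} (M : Multiset (ALConf T β)) (θ' : T) (j : Fin β) : Prop :=
  ∃ c ∈ M, c.lconf.tmpl = θ' ∧ c.iid = some j

/-- The quadruple `(θ, k, θ', k')` is `(M₁, M₂, occ, st)`-awake, where the kind of the
executed simple statement `st` is given by `l`: the stepping thread (template `θ`,
instance ID `k`) keeps its instance ID; a fork of template `θ'` assigns to the new
thread the minimal instance ID not occupied (by `occ`) and not used in `M₁`; a join
removes the joined terminated thread (template `θ'`, instance ID `k'`). -/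
def Awake {T : Type} {β : ℕ} (P : Prog T) (M₁ M₂ : Multiset (ALConf T β))
    (occ : Set (T × Fin β)) (l : Lab T)
    (θ : T) (k : Option (Fin β)) (θ' : T) (k' : Option (Fin β)) : Prop :=
  match l with
  | .atomic =>
      ∃ N a b, M₁ = a ::ₘ N ∧ M₂ = b ::ₘ N ∧
        a.lconf.tmpl = θ ∧ a.iid = k ∧ b.lconf.tmpl = θ ∧ b.iid = k ∧
        a.lconf.tid = b.lconf.tid
  | .forkL θf =>
      θf = θ' ∧ ∃ N a b c, ∃ j : Fin β, k' = some j ∧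
        M₁ = a ::ₘ N ∧ M₂ = b ::ₘ c ::ₘ N ∧
        a.lconf.tmpl = θ ∧ a.iid = k ∧ b.lconf.tmpl = θ ∧ b.iid = k ∧
        b.lconf.tid = a.lconf.tid ∧ b.lconf.st = a.lconf.st ∧
        c.lconf.tmpl = θ' ∧ c.iid = some j ∧ c.lconf.rem = Rem.run (P.body θ') ∧
        (∀ i : Fin β, i < j → ((θ', i) ∈ occ ∨ UsedIn M₁ θ' i)) ∧
        ¬ ((θ', j) ∈ occ ∨ UsedIn M₁ θ' j)
  | .joinL =>
      ∃ N a b d, M₁ = a ::ₘ d ::ₘ N ∧ M₂ = b ::ₘ N ∧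
        a.lconf.tmpl = θ ∧ a.iid = k ∧ b.lconf.tmpl = θ ∧ b.iid = k ∧
        b.lconf.tid = a.lconf.tid ∧ b.lconf.st = a.lconf.st ∧
        d.lconf.rem = Rem.term ∧ d.lconf.tmpl = θ' ∧ d.iid = k'

/-- `(M̂₀, …, M̂ₙ, α, γ)` is admissible for the execution `cfg 0 → … → cfg n` (whose
statement kinds are `lab`): the initial augmented configuration is a singleton with
instance ID `⊥`; each `M̂ᵢ` is conformist and de-augments (dropping the instance ID) to
`Mᵢ`; and the thread mappings `α` (current thread) and `γ` (forked/joined thread)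
witness each step as awake (with `occ = ∅`). -/
def Admissible {T : Type} {β : ℕ} [DecidableEq T] (P : Prog T) (n : ℕ)
    (cfg : ℕ → GConf T) (lab : ℕ → Lab T)
    (Mhat : ℕ → Multiset (ALConf T β)) (α γ : ℕ → T × Option (Fin β)) : Prop :=
  (∃ a : ALConf T β, Mhat 0 = {a} ∧ a.iid = none) ∧
  (∀ i ≤ n, (Mhat i).map (fun c => c.lconf) = (cfg i).1 ∧ Conformist (Mhat i)) ∧
  (∀ i < n, Awake P (Mhat i) (Mhat (i + 1)) ∅ (lab i)
      (α i).1 (α i).2 (γ i).1 (γ i).2)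

end Conc


namespace ConcAux
open Conc

/-- The per-label shape of a step, at the multiset level. -/
def Shape {T : Type} (P : Prog T) (l : Lab T) (M M' : Multiset (LConf T)) : Prop :=
  match l with
  | .atomic => ∃ a b N, M = a ::ₘ N ∧ M' = b ::ₘ N ∧
      b.tmpl = a.tmpl ∧ b.tid = a.tid
  | .forkL θ' => ∃ a b c N, M = a ::ₘ N ∧ M' = b ::ₘ c ::ₘ N ∧
      b.tmpl = a.tmpl ∧ b.tid = a.tid ∧ b.st = a.st ∧
      c.tmpl = θ' ∧ c.rem = Rem.run (P.body θ')
  | .joinL => ∃ a d b N, M = a ::ₘ d ::ₘ N ∧ M' = b ::ₘ N ∧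
      b.tmpl = a.tmpl ∧ b.tid = a.tid ∧ b.st = a.st ∧ d.rem = Rem.term

lemma step_shape {T : Type} {P : Prog T} {l : Lab T} {c c' : GConf T}
    (h : Step P l c c') : Shape P l c.1 c'.1 := by
  induction h with
  | assume_ h => exact ⟨_, _, 0, rfl, rfl, rfl, rfl⟩
  | assignGlobal hx => exact ⟨_, _, 0, rfl, rfl, rfl, rfl⟩
  | assignLocal hx => exact ⟨_, _, 0, rfl, rfl, rfl, rfl⟩
  | assert₁ h => exact ⟨_, _, 0, rfl, rfl, rfl, rfl⟩
  | assert₂ h => exact ⟨_, _, 0, rfl, rfl, rfl, rfl⟩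
  | ite₁ h => exact ⟨_, _, 0, rfl, rfl, rfl, rfl⟩
  | ite₂ h => exact ⟨_, _, 0, rfl, rfl, rfl, rfl⟩
  | while₁ h => exact ⟨_, _, 0, rfl, rfl, rfl, rfl⟩
  | while₂ h => exact ⟨_, _, 0, rfl, rfl, rfl, rfl⟩
  | fork => exact ⟨_, _, _, 0, rfl, rfl, rfl, rfl, rfl, rfl, rfl⟩
  | join => exact ⟨_, _, _, 0, rfl, rfl, rfl, rfl, rfl, rfl⟩
  | frame h ih =>
      rename_i l M₁ M₁' M₂ g g'
      cases l with
      | atomic =>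
          obtain ⟨a, b, N, h1, h2, h3, h4⟩ := ih
          have h1' : M₁ = a ::ₘ N := h1
          have h2' : M₁' = b ::ₘ N := h2
          exact ⟨a, b, N + M₂, by show M₁ + M₂ = _; rw [h1', Multiset.cons_add],
            by show M₁' + M₂ = _; rw [h2', Multiset.cons_add], h3, h4⟩
      | forkL θ' =>
          obtain ⟨a, b, c, N, h1, h2, h3⟩ := ih
          have h1' : M₁ = a ::ₘ N := h1
          have h2' : M₁' = b ::ₘ c ::ₘ N := h2
          exact ⟨a, b, c, N + M₂, by show M₁ + M₂ = _; rw [h1', Multiset.cons_add],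
            by show M₁' + M₂ = _; rw [h2', Multiset.cons_add, Multiset.cons_add], h3⟩
      | joinL =>
          obtain ⟨a, d, b, N, h1, h2, h3⟩ := ih
          have h1' : M₁ = a ::ₘ d ::ₘ N := h1
          have h2' : M₁' = b ::ₘ N := h2
          exact ⟨a, d, b, N + M₂,
            by show M₁ + M₂ = _; rw [h1', Multiset.cons_add, Multiset.cons_add],
            by show M₁' + M₂ = _; rw [h2', Multiset.cons_add], h3⟩

lemma map_cons_inv {α β' : Type*} (f : α → β') {s : Multiset α} {b : β'} {t : Multiset β'}
    (h : s.map f = b ::ₘ t) : ∃ a u, s = a ::ₘ u ∧ f a = b ∧ u.map f = t := by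
  classical
  obtain ⟨a, ha, hfa, hu⟩ := (Multiset.map_eq_cons f s t b).2 h
  exact ⟨a, s.erase a, (Multiset.cons_erase ha).symm, hfa, hu⟩

lemma exists_unused {T : Type} {β : ℕ} [DecidableEq T]
    (Mh : Multiset (ALConf T β)) (θ' : T)
    (hcount : Mh.countP (fun c => c.lconf.tmpl = θ') < β) :
    ∃ j : Fin β, ¬ UsedIn Mh θ' j := by
  classical
  by_contra hall
  push_neg at hall
  have hsub : (Finset.univ.image (fun j : Fin β => some j)) ⊆
      ((Mh.filter (fun c => c.lconf.tmpl = θ')).map (fun c => c.iid)).toFinset := by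
    intro x hx
    simp only [Finset.mem_image, Finset.mem_univ, true_and] at hx
    obtain ⟨j, rfl⟩ := hx
    obtain ⟨c, hc, hct, hci⟩ := hall j
    rw [Multiset.mem_toFinset, Multiset.mem_map]
    exact ⟨c, Multiset.mem_filter.2 ⟨hc, hct⟩, hci⟩
  have h1 : β ≤ ((Mh.filter (fun c => c.lconf.tmpl = θ')).map
      (fun c => c.iid)).toFinset.card := by
    have := Finset.card_le_card hsub
    rwa [Finset.card_image_of_injective _ (Option.some_injective _), Finset.card_univ,
      Fintype.card_fin] at this
  have h2 := Multiset.toFinset_card_le ((Mh.filter (fun c => c.lconf.tmpl = θ')).map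
      (fun c => c.iid))
  rw [Multiset.card_map, ← Multiset.countP_eq_card_filter] at h2
  omega

lemma exists_min_unused {T : Type} {β : ℕ}
    (Mh : Multiset (ALConf T β)) (θ' : T)
    (hne : ∃ j : Fin β, ¬ UsedIn Mh θ' j) :
    ∃ j : Fin β, ¬ UsedIn Mh θ' j ∧ ∀ i : Fin β, i < j → UsedIn Mh θ' i := by
  classical
  obtain ⟨j0, hj0⟩ := hne
  have hex : ∃ m : ℕ, ∃ h : m < β, ¬ UsedIn Mh θ' ⟨m, h⟩ :=
    ⟨j0.val, j0.isLt, by simpa using hj0⟩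
  obtain ⟨hm, hmu⟩ := Nat.find_spec hex
  refine ⟨⟨Nat.find hex, hm⟩, hmu, ?_⟩
  intro i hi
  by_contra hiu
  exact Nat.find_min hex (m := i.val) hi ⟨i.isLt, by simpa using hiu⟩

lemma extend {T : Type} [DecidableEq T] {β : ℕ} (P : Prog T) {l : Lab T}
    {c c' : GConf T} (hstep : Step P l c c') (Mh : Multiset (ALConf T β))
    (hmap : Mh.map (fun x => x.lconf) = c.1) (hconf : Conformist Mh)
    (hw : ∀ θ, tmplCount c'.1 θ ≤ β) :
    ∃ (Mh' : Multiset (ALConf T β)) (α γ : T × Option (Fin β)),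
      Mh'.map (fun x => x.lconf) = c'.1 ∧ Conformist Mh' ∧
      Awake P Mh Mh' ∅ l α.1 α.2 γ.1 γ.2 := by
  classical
  have hsh := step_shape hstep
  cases l with
  | atomic =>
      obtain ⟨a, b, N, h1, h2, h3, h4⟩ := hsh
      rw [h1] at hmap
      obtain ⟨ah, Nh, rfl, haf, hNf⟩ := map_cons_inv _ hmap
      refine ⟨(⟨b, ah.iid⟩ : ALConf T β) ::ₘ Nh, (a.tmpl, ah.iid), (P.main, none),
        ?_, ?_, ?_⟩
      · rw [h2, Multiset.map_cons, hNf]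
      · intro θ k
        have := hconf θ k
        rw [Multiset.countP_cons] at this ⊢
        have heq : ((⟨b, ah.iid⟩ : ALConf T β).lconf.tmpl = θ ∧
            (⟨b, ah.iid⟩ : ALConf T β).iid = k) ↔ (ah.lconf.tmpl = θ ∧ ah.iid = k) := by
          constructor <;> (rintro ⟨hh1, hh2⟩; refine ⟨?_, hh2⟩)
          · rw [← hh1]; show ah.lconf.tmpl = b.tmpl; rw [haf, h3]
          · show b.tmpl = θ; rw [h3, ← haf]; exact hh1
        rw [if_congr heq rfl rfl]
        exact this
      · refine ⟨Nh, ah, ⟨b, ah.iid⟩, rfl, rfl, by rw [haf], rfl, ?_, rfl, ?_⟩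
        · show b.tmpl = a.tmpl; rw [h3]
        · show ah.lconf.tid = b.tid; rw [haf, h4]
  | joinL =>
      obtain ⟨a, d, b, N, h1, h2, h3, h4, h5, h6⟩ := hsh
      rw [h1] at hmap
      obtain ⟨ah, Nh1, rfl, haf, hNf1⟩ := map_cons_inv _ hmap
      obtain ⟨dh, Nh, rfl, hdf, hNf⟩ := map_cons_inv _ hNf1
      refine ⟨(⟨b, ah.iid⟩ : ALConf T β) ::ₘ Nh, (a.tmpl, ah.iid),
        (d.tmpl, dh.iid), ?_, ?_, ?_⟩
      · rw [h2, Multiset.map_cons, hNf]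
      · intro θ k
        have := hconf θ k
        rw [Multiset.countP_cons, Multiset.countP_cons] at this
        rw [Multiset.countP_cons]
        have heq : ((⟨b, ah.iid⟩ : ALConf T β).lconf.tmpl = θ ∧
            (⟨b, ah.iid⟩ : ALConf T β).iid = k) ↔ (ah.lconf.tmpl = θ ∧ ah.iid = k) := by
          constructor <;>
            (rintro ⟨hh1, hh2⟩; refine ⟨?_, hh2⟩) 
          · rw [← hh1]; show ah.lconf.tmpl = b.tmpl; rw [h3, haf]
          · show b.tmpl = θ; rw [h3, ← haf]; exact hh1
        rw [if_congr heq rfl rfl]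
        omega
      · refine ⟨Nh, ah, ⟨b, ah.iid⟩, dh, rfl, rfl, by rw [haf], rfl, ?_, rfl, ?_, ?_,
          ?_, by rw [hdf], rfl⟩
        · show b.tmpl = a.tmpl; rw [h3]
        · show b.tid = ah.lconf.tid; rw [h4, haf]
        · show b.st = ah.lconf.st; rw [h5, haf]
        · show dh.lconf.rem = Rem.term; rw [hdf, h6]
  | forkL θf =>
      obtain ⟨a, b, cc, N, h1, h2, h3, h4, h5, h6, h7⟩ := hsh
      rw [h1] at hmap
      obtain ⟨ah, Nh, rfl, haf, hNf⟩ := map_cons_inv _ hmap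
      -- count of template θf in Mh is < β
      have hcnt : (ah ::ₘ Nh).countP (fun x => x.lconf.tmpl = θf) < β := by
        have hwc := hw θf
        rw [h2] at hwc
        have hmc : ((ah ::ₘ Nh).map (fun x => x.lconf)).countP
            (fun x => x.tmpl = θf) =
            (ah ::ₘ Nh).countP (fun x => x.lconf.tmpl = θf) := by
          rw [Multiset.countP_map, Multiset.countP_eq_card_filter]
        rw [Multiset.map_cons, hNf, haf] at hmc
        have : tmplCount (b ::ₘ cc ::ₘ N) θf =
            tmplCount (a ::ₘ N) θf + 1 := by
          unfold tmplCount
          rw [Multiset.filter_cons, Multiset.filter_cons, Multiset.filter_cons]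
          rw [h3, h6]
          simp only [if_pos rfl]
          rcases eq_or_ne a.tmpl θf with hh | hh <;> simp [hh]
        rw [this] at hwc
        unfold tmplCount at hwc
        rw [← Multiset.countP_eq_card_filter, hmc] at hwc
        omega
      obtain ⟨j, hju, hjmin⟩ := exists_min_unused _ θf (exists_unused _ _ hcnt)
      refine ⟨(⟨b, ah.iid⟩ : ALConf T β) ::ₘ (⟨cc, some j⟩ : ALConf T β) ::ₘ Nh,
        (a.tmpl, ah.iid), (θf, some j), ?_, ?_, ?_⟩
      · rw [h2, Multiset.map_cons, Multiset.map_cons, hNf]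
      · intro θ k
        have hold := hconf θ k
        rw [Multiset.countP_cons] at hold
        rw [Multiset.countP_cons, Multiset.countP_cons]
        have heq : ((⟨b, ah.iid⟩ : ALConf T β).lconf.tmpl = θ ∧
            (⟨b, ah.iid⟩ : ALConf T β).iid = k) ↔ (ah.lconf.tmpl = θ ∧ ah.iid = k) := by
          constructor <;> (rintro ⟨hh1, hh2⟩; refine ⟨?_, hh2⟩)
          · rw [← hh1]; show ah.lconf.tmpl = b.tmpl; rw [haf, h3]
          · show b.tmpl = θ; rw [h3, ← haf]; exact hh1
        by_cases hpc : ((⟨cc, some j⟩ : ALConf T β).lconf.tmpl = θ ∧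
            (⟨cc, some j⟩ : ALConf T β).iid = k)
        · obtain ⟨hpc1, hpc2⟩ := hpc
          have hθ : θf = θ := h6.symm.trans hpc1
          have hk : k = some j := hpc2.symm
          subst hθ; subst hk
          have hz : (ah ::ₘ Nh).countP
              (fun x => x.lconf.tmpl = θf ∧ x.iid = some j) = 0 := by
            rw [Multiset.countP_eq_zero]
            intro x hx hpx
            exact hju ⟨x, hx, hpx.1, hpx.2⟩
          rw [Multiset.countP_cons] at hz
          have hzN : Nh.countP (fun x => x.lconf.tmpl = θf ∧ x.iid = some j) = 0 := by
            omega
          have hza : ¬ (ah.lconf.tmpl = θf ∧ ah.iid = some j) := by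
            intro hp
            rw [if_pos hp] at hz; omega
          rw [hzN, if_pos ⟨h6, rfl⟩, if_neg (heq.not.2 hza)]
        · rw [if_neg hpc, if_congr heq rfl rfl]
          exact hold
      · refine ⟨rfl, Nh, ah, ⟨b, ah.iid⟩, ⟨cc, some j⟩, j, rfl, rfl, rfl,
          by rw [haf], rfl, ?_, rfl, ?_, ?_, h6, rfl, h7, ?_, ?_⟩
        · show b.tmpl = a.tmpl; rw [h3]
        · show b.tid = ah.lconf.tid; rw [h4, haf]
        · show b.st = ah.lconf.st; rw [h5, haf]
        · intro i hi
          exact Or.inr (hjmin i hi)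
        · rintro (hmem | hused)
          · exact hmem
          · exact hju hused

end ConcAux

open Conc in
/-- existence of admissible augmentations — every execution of `prog`
whose thread width is at most `β` admits augmented global configurations and thread
mappings forming an admissible tuple. -/
theorem exists_admissible_augmentation {T : Type} [DecidableEq T] (P : Prog T)
    (β n : ℕ) (cfg : ℕ → GConf T) (lab : ℕ → Lab T)
    (hexec : IsExec P n cfg lab)
    (hwidth : ∀ i ≤ n, ∀ θ : T, tmplCount (cfg i).1 θ ≤ β) :
    ∃ (Mhat : ℕ → Multiset (ALConf T β)) (α γ : ℕ → T × Option (Fin β)),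
      Admissible P n cfg lab Mhat α γ := by
  classical
  induction n with
  | zero =>
      obtain ⟨s, hs⟩ := hexec.1
      refine ⟨fun _ => {(⟨⟨.run (P.body P.main), P.main, none, s⟩, none⟩ : ALConf T β)},
        fun _ => (P.main, none), fun _ => (P.main, none), ?_, ?_, ?_⟩
      · exact ⟨_, rfl, rfl⟩
      · intro i hi
        interval_cases i
        refine ⟨by rw [Multiset.map_singleton, hs], ?_⟩
        intro θ k
        exact le_trans (Multiset.countP_le_card _ _) (by simp)
      · intro i hi
        omega
  | succ n ih =>
      have hexec' : IsExec P n cfg lab :=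
        ⟨hexec.1, fun i hi => hexec.2 i (by omega)⟩
      have hwidth' : ∀ i ≤ n, ∀ θ : T, tmplCount (cfg i).1 θ ≤ β :=
        fun i hi => hwidth i (by omega)
      obtain ⟨Mhat, α, γ, hadm⟩ := ih hexec' hwidth'
      obtain ⟨Mh', α', γ', hmap', hconf', hawake'⟩ :=
        ConcAux.extend P (hexec.2 n (by omega)) (Mhat n)
          (hadm.2.1 n le_rfl).1 (hadm.2.1 n le_rfl).2
          (hwidth (n + 1) le_rfl)
      refine ⟨fun i => if i = n + 1 then Mh' else Mhat i,
        fun i => if i = n then α' else α i,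
        fun i => if i = n then γ' else γ i, ?_, ?_, ?_⟩
      · obtain ⟨a0, ha0, ha0'⟩ := hadm.1
        exact ⟨a0, by simpa using ha0, ha0'⟩
      · intro i hi
        rcases eq_or_ne i (n + 1) with rfl | hne
        · simpa using ⟨hmap', hconf'⟩
        · simp only [if_neg hne]
          exact hadm.2.1 i (by omega)
      · intro i hi
        rcases eq_or_ne i n with rfl | hne
        · simpa using hawake'
        · have h1 : i + 1 ≠ n + 1 := by omega
          have h2 : i ≠ n + 1 := by omega
          simp only [if_neg hne, if_neg h1, if_neg h2]
          exact hadm.2.2 i (by omega)
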